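/- For all integers k ≥ 2, the path graphs satisfy: mdi_k(P_{k+2}) = k + 1, mdi_k(P_{k+3}) = k + 2, mdi_k(P_{k+4}) = k + 4, and mdi_k(P_{k+5}) ≥ k + 6. -/

import Mathlib

/-- `J` is a distance-`k` independent set in `G`: any two distinct vertices of `J`
are at graph distance at least `k + 1`. -/
def DkIndep {V : Type*} (G : SimpleGraph V) (k : ℕ) (J : Set V) : Prop :=
  ∀ ⦃u⦄, u ∈ J → ∀ ⦃v⦄, v ∈ J → u ≠ v → k + 1 ≤ G.dist u v

/-- `J` is a maximal distance-`k` independent set (`k`-MDIS) of `G`. -/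
def MaxDkIndep {V : Type*} (G : SimpleGraph V) (k : ℕ) (J : Set V) : Prop :=
  DkIndep G k J ∧ ∀ J', DkIndep G k J' → J ⊆ J' → J' = J

/-- `mdi G k` is the number of maximal distance-`k` independent sets of `G`. -/
noncomputable def mdi {V : Type*} (G : SimpleGraph V) (k : ℕ) : ℕ :=
  {J : Set V | MaxDkIndep G k J}.ncard

/-- `f_k(n)` from the paper. -/
def fk (k n : ℕ) : ℕ :=
  if n ≤ k + 1 then n else n - (n - k % 2) / (k / 2 + 1) + 1

/-- closed ball `N_k[x]`. -/
def ball {V : Type*} (G : SimpleGraph V) (k : ℕ) (x : V) : Set V :=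
  {v | G.dist x v ≤ k}

/-- a leaf is a vertex of degree 1. -/
def IsLeaf {V : Type*} (G : SimpleGraph V) (v : V) : Prop :=
  (G.neighborSet v).ncard = 1

/-- eccentricity of a vertex. -/
noncomputable def ecc {V : Type*} [Fintype V] (G : SimpleGraph V) (v : V) : ℕ :=
  Finset.univ.sup (G.dist v)

/-- diameter of a finite graph. -/
noncomputable def gdiam {V : Type*} [Fintype V] (G : SimpleGraph V) : ℕ :=
  Finset.univ.sup (ecc G)

/-- a central vertex is one of minimum eccentricity. -/
def IsCentral {V : Type*} [Fintype V] (G : SimpleGraph V) (v : V) : Prop :=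
  ∀ u, ecc G v ≤ ecc G u

/-- a `k`-twin: some other vertex has the same closed `k`-ball. -/
def KTwin {V : Type*} (G : SimpleGraph V) (k : ℕ) (u : V) : Prop :=
  ∃ v, v ≠ u ∧ ball G k u = ball G k v

/-- a diametral leaf: a leaf whose eccentricity equals the diameter. -/
def IsDiametralLeaf {V : Type*} [Fintype V] (G : SimpleGraph V) (u : V) : Prop :=
  IsLeaf G u ∧ ecc G u = gdiam G

/-- a `k`-special pair. -/
def KSpecial {V : Type*} [Fintype V] (G : SimpleGraph V) (k : ℕ) (x y : V) : Prop :=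
  IsDiametralLeaf G x ∧ IsDiametralLeaf G y ∧ KTwin G k x ∧ KTwin G k y ∧
    ball G k x ≠ ball G k y

/-- `mdi*_k(G, ℓ)`. -/
noncomputable def mdiStar {V : Type*} (G : SimpleGraph V) (k : ℕ) (ℓ : V) : ℕ :=
  {J : Set V | MaxDkIndep G k J ∧ ℓ ∈ J ∧ ∃ w ∉ J, ball G k w ∩ J = {ℓ}}.ncard

/-- The spider tree `S_{p,m}`: a center (`none`) together with `p` legs of `m` vertices. -/
def spider (p m : ℕ) : SimpleGraph (Option (Fin p × Fin m)) :=
  SimpleGraph.fromRel fun a b =>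
    match a, b with
    | none, some (_, j) => (j : ℕ) = 0
    | some (i, j), some (i', j') => i = i' ∧ (j : ℕ) + 1 = (j' : ℕ)
    | _, _ => False

/-- `S'_{p,m}`: the spider `S_{p,m}` with one leaf at distance `m` from the center removed. -/
def spider' (p m : ℕ) (hp : 0 < p) (hm : 0 < m) :=
  (spider p m).induce
    {v | v ≠ some (⟨0, hp⟩, ⟨m - 1, Nat.sub_lt hm Nat.one_pos⟩)}

/-- The double spider `B_{p₁,p₂,s}`: two adjacent centers (`Sum.inl false`, `Sum.inl true`),
with `p₁` legs of `s` vertices on the first and `p₂` legs of `s` vertices on the second. -/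
def btree (p₁ p₂ s : ℕ) : SimpleGraph (Bool ⊕ ((Fin p₁ ⊕ Fin p₂) × Fin s)) :=
  SimpleGraph.fromRel fun a b =>
    match a, b with
    | Sum.inl x, Sum.inl y => x ≠ y
    | Sum.inl false, Sum.inr (Sum.inl _, j) => (j : ℕ) = 0
    | Sum.inl true, Sum.inr (Sum.inr _, j) => (j : ℕ) = 0
    | Sum.inr (c, j), Sum.inr (c', j') => c = c' ∧ (j : ℕ) + 1 = (j' : ℕ)
    | _, _ => False

/-- `G` contains a subgraph isomorphic to `H`. -/
def ContainsSub {V W : Type*} (G : SimpleGraph V) (H : SimpleGraph W) : Prop :=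
  ∃ f : W → V, Function.Injective f ∧ ∀ a b, H.Adj a b → G.Adj (f a) (f b)

/-- A pendant path on `s` vertices `P 0, …, P (s-1)` attached to `w`:
`P 0` is a leaf, consecutive vertices are adjacent, interior vertices have degree 2,
and `P (s-1)` is adjacent to `w`. -/
def IsPendantPath {V : Type*} (T : SimpleGraph V) (s : ℕ) (P : ℕ → V) (w : V) : Prop :=
  Set.InjOn P (Set.Iio s) ∧ (∀ i < s, P i ≠ w) ∧ IsLeaf T (P 0) ∧
    (∀ i, i + 1 < s → T.Adj (P i) (P (i + 1))) ∧
    (∀ i, 0 < i → i < s → (T.neighborSet (P i)).ncard = 2) ∧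
    T.Adj (P (s - 1)) w

/-- Isomorphism of simple graphs on `Fin n` as a setoid. -/
def graphSetoid (n : ℕ) : Setoid (SimpleGraph (Fin n)) where
  r G H := Nonempty (G ≃g H)
  iseqv := ⟨fun _ => ⟨SimpleGraph.Iso.refl⟩, fun ⟨e⟩ => ⟨e.symm⟩, fun ⟨e⟩ ⟨f⟩ => ⟨e.trans f⟩⟩

/-- The number of isomorphism classes of graphs in a set of graphs on `Fin n`. -/
noncomputable def numIsoClasses {n : ℕ} (S : Set (SimpleGraph (Fin n))) : ℕ :=
  ((fun G => Quotient.mk (graphSetoid n) G) '' S).ncard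

/-! In `P_n` with `n ≤ 2k + 2` no three vertices are pairwise more than `k` apart, so a `k`-MDIS
is either a singleton `{i}` within distance `k` of both ends, or a pair `{u, v}` with `v - u > k`,
and for `n = k + 1 + r` (`r ≤ k + 1`) every such pair already dominates the path. Writing the
pairs as `{a, b + k}` with `a < b ≤ r` gives `mdi_k(P_{k+1+r}) = (k + 1 - r) + C(r + 1, 2)`, which
is `k + 1`, `k + 2`, `k + 4`, `k + 7` for `r = 1, 2, 3, 4`. The one case outside this range,
`k = 2` and `n = 7`, is a finite check: `P_7` has `8` maximal distance-`2` independent sets. -/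

open SimpleGraph Finset

theorem maxDkIndep_iff {V : Type*} {G : SimpleGraph V} {k : ℕ} {J : Set V} :
    MaxDkIndep G k J ↔ DkIndep G k J ∧ ∀ v, ∃ u ∈ J, G.dist u v ≤ k := by
  refine ⟨fun ⟨hJ, hmax⟩ => ⟨hJ, fun v => ?_⟩, fun ⟨hJ, hdom⟩ => ⟨hJ, fun J' hJ' hsub => ?_⟩⟩
  · by_contra! hfar
    have hv : v ∉ J := fun hv => by simpa using hfar v hv
    have hins : DkIndep G k (insert v J) := by
      rintro a (rfl | ha) b (rfl | hb) hab
      · exact absurd rfl hab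
      · rw [dist_comm]; exact hfar b hb
      · exact hfar a ha
      · exact hJ ha hb hab
    exact hv (hmax _ hins (Set.subset_insert v J) ▸ Set.mem_insert v J)
  · refine Set.Subset.antisymm (fun w hw => ?_) hsub
    by_contra hwJ
    obtain ⟨u, hu, hle⟩ := hdom w
    have := hJ' (hsub hu) hw (by rintro rfl; exact hwJ hu)
    omega

theorem Set.ncard_setOf_eq_card_filter_finset {V : Type*} [Fintype V] (P : Set V → Prop)
    [DecidablePred fun s : Finset V => P s] :
    {J : Set V | P J}.ncard = #{s : Finset V | P s} := by
  classical
  have himage : {J : Set V | P J} = (↑) '' {s : Finset V | P s} := by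
    ext J
    refine ⟨fun hJ => ⟨J.toFinset, by simpa using hJ, by simp⟩, ?_⟩
    rintro ⟨s, hs, rfl⟩
    exact hs
  rw [himage, Set.ncard_image_of_injective _ Finset.coe_injective, ← Set.ncard_coe_finset]
  simp

namespace SimpleGraph

theorem pathGraph_le_length_walk {n : ℕ} {u v : Fin n} (p : (pathGraph n).Walk u v) :
    (u : ℕ) - v + (v - u) ≤ p.length := by
  induction p with
  | nil => omega
  | cons h _ ih =>
    rw [pathGraph_adj] at h
    simp only [Walk.length_cons]
    omega

theorem pathGraph_dist {n : ℕ} (u v : Fin n) :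
    (pathGraph n).dist u v = (u : ℕ) - v + (v - u) := by
  obtain ⟨m, rfl⟩ : ∃ m, n = m + 1 := ⟨n - 1, by have := u.isLt; omega⟩
  have hconn := pathGraph_connected m
  have hle : ∀ d (a b : Fin (m + 1)), (a : ℕ) + d = b → (pathGraph (m + 1)).dist a b ≤ d := by
    intro d
    induction d with
    | zero => intro a b h; simp [Fin.ext (by omega : (a : ℕ) = b)]
    | succ d ih =>
      intro a b h
      let c : Fin (m + 1) := ⟨a + d, by omega⟩
      have hcb : (pathGraph (m + 1)).Adj c b := pathGraph_adj.2 (.inl (by simp [c]; omega))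
      calc (pathGraph (m + 1)).dist a b
          ≤ (pathGraph (m + 1)).dist a c + (pathGraph (m + 1)).dist c b := hconn.dist_triangle
        _ ≤ d + 1 := add_le_add (ih a c rfl) (dist_le hcb.toWalk)
  refine le_antisymm ?_ ?_
  · rcases le_total (u : ℕ) v with h | h
    · have := hle _ u v (Nat.add_sub_cancel' h)
      omega
    · have := hle _ v u (Nat.add_sub_cancel' h)
      rw [dist_comm] at this
      omega
  · obtain ⟨p, hp⟩ := hconn.exists_walk_length_eq_dist u v
    exact hp ▸ pathGraph_le_length_walk p

end SimpleGraph

section PathGraph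

variable {n k : ℕ} {J : Set (Fin n)}

theorem maxDkIndep_pathGraph_iff :
    MaxDkIndep (pathGraph n) k J ↔
      (∀ u ∈ J, ∀ v ∈ J, u < v → (u : ℕ) + k < v) ∧
        ∀ v : Fin n, ∃ u ∈ J, (u : ℕ) ≤ v + k ∧ (v : ℕ) ≤ u + k := by
  simp only [maxDkIndep_iff, DkIndep, pathGraph_dist]
  refine and_congr ⟨fun h u hu v hv huv => ?_, fun h u hu v hv huv => ?_⟩
    (forall_congr' fun v => exists_congr fun u => and_congr_right fun _ => by omega)
  · have := h hu hv huv.ne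
    rw [Fin.lt_def] at huv
    omega
  · rcases huv.lt_or_gt with huv | huv
    · have := h u hu v hv huv
      omega
    · have := h v hv u hu huv
      omega

theorem DkIndep.pathGraph_eq_or_eq (hn : n ≤ 2 * k + 2) (hJ : DkIndep (pathGraph n) k J)
    {a b c : Fin n} (ha : a ∈ J) (hb : b ∈ J) (hc : c ∈ J) (hab : a ≠ b) : c = a ∨ c = b := by
  by_contra! hne
  have hab' := hJ ha hb hab
  have hca := hJ hc ha hne.1
  have hcb := hJ hc hb hne.2
  simp only [pathGraph_dist] at hab' hca hcb
  have := a.isLt; have := b.isLt; have := c.isLt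
  omega

theorem MaxDkIndep.pathGraph_eq_singleton_or_pair (hn : n ≤ 2 * k + 2) (hn₀ : 0 < n)
    (hJ : MaxDkIndep (pathGraph n) k J) :
    (∃ i, J = {i}) ∨ ∃ u v : Fin n, (u : ℕ) + k < v ∧ J = {u, v} := by
  obtain ⟨hsep, hdom⟩ := maxDkIndep_pathGraph_iff.1 hJ
  obtain ⟨u, hu, -⟩ := hdom ⟨0, hn₀⟩
  by_cases hsingle : ∀ v ∈ J, v = u
  · exact .inl ⟨u, Set.eq_singleton_iff_unique_mem.2 ⟨hu, hsingle⟩⟩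
  obtain ⟨v, hv, hvu⟩ := not_forall₂.1 hsingle
  have hpair : ∀ {a b}, a ∈ J → b ∈ J → a < b → J = {a, b} := fun ha hb hab =>
    Set.Subset.antisymm (fun c hc => hJ.1.pathGraph_eq_or_eq hn ha hb hc hab.ne)
      (Set.insert_subset ha (Set.singleton_subset_iff.2 hb))
  rcases Ne.lt_or_gt hvu with h | h
  · exact .inr ⟨v, u, hsep v hv u hu h, hpair hv hu h⟩
  · exact .inr ⟨u, v, hsep u hu v hv h, hpair hu hv h⟩

end PathGraph

def pathMaxDkIndep (k r : ℕ) :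
    Fin (k + 1 - r) ⊕ {x : Fin (r + 1) × Fin (r + 1) // x.1 < x.2} → Set (Fin (k + 1 + r))
  | .inl c => {⟨r + c, by omega⟩}
  | .inr x => {⟨x.1.1, by omega⟩, ⟨x.1.2 + k, by omega⟩}

theorem pathMaxDkIndep_injective (k r : ℕ) : Function.Injective (pathMaxDkIndep k r) := by
  rintro (c | ⟨⟨a, b⟩, hab⟩) (c' | ⟨⟨a', b'⟩, hab'⟩) h
  · simpa [pathMaxDkIndep, Fin.ext_iff] using h
  · have hcard := congrArg Set.ncard h
    simp only [Fin.lt_def] at hab'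
    rw [pathMaxDkIndep, pathMaxDkIndep, Set.ncard_singleton,
      Set.ncard_pair (by simp only [ne_eq, Fin.ext_iff]; omega)] at hcard
    omega
  · have hcard := congrArg Set.ncard h
    simp only [Fin.lt_def] at hab
    rw [pathMaxDkIndep, pathMaxDkIndep, Set.ncard_singleton,
      Set.ncard_pair (by simp only [ne_eq, Fin.ext_iff]; omega)] at hcard
    omega
  · simp only [pathMaxDkIndep, Set.pair_eq_pair_iff, Fin.ext_iff, Nat.add_right_cancel_iff,
      Sum.inr.injEq, Subtype.mk.injEq, Prod.mk.injEq] at h ⊢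
    simp only [Fin.lt_def] at hab hab'
    omega

theorem range_pathMaxDkIndep {k r : ℕ} (hr : r ≤ k + 1) :
    Set.range (pathMaxDkIndep k r) = {J | MaxDkIndep (pathGraph (k + 1 + r)) k J} := by
  ext J
  constructor
  · rintro ⟨c | ⟨⟨a, b⟩, hab⟩, rfl⟩ <;> refine maxDkIndep_pathGraph_iff.2 ⟨?_, fun v => ?_⟩
    · rintro u rfl v rfl h
      exact absurd h (lt_irrefl _)
    · exact ⟨_, rfl, by simp only; omega⟩
    · simp only [Fin.lt_def] at hab
      rintro u (rfl | rfl) v (rfl | rfl) h <;> simp only [Fin.lt_def] at h ⊢ <;> omega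
    · simp only [Fin.lt_def] at hab
      by_cases hv : (v : ℕ) ≤ a + k
      · exact ⟨_, .inl rfl, by simp only; omega⟩
      · exact ⟨_, .inr rfl, by simp only; omega⟩
  · intro hJ
    rcases hJ.pathGraph_eq_singleton_or_pair (by omega) (by omega) with ⟨i, rfl⟩ | ⟨u, v, huv, rfl⟩
    · obtain ⟨-, hdom⟩ := maxDkIndep_pathGraph_iff.1 hJ
      have hfirst := hdom ⟨0, by omega⟩
      have hlast := hdom ⟨k + r, by omega⟩
      simp only [Set.mem_singleton_iff, exists_eq_left] at hfirst hlast
      exact ⟨.inl ⟨i - r, by omega⟩, by simp only [pathMaxDkIndep, Set.singleton_eq_singleton_iff, Fin.ext_iff]; omega⟩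
    · exact ⟨.inr ⟨(⟨u, by omega⟩, ⟨v - k, by omega⟩), by simp only [Fin.lt_def]; omega⟩,
        by simp only [pathMaxDkIndep, Fin.eta]; congr; exact Nat.sub_add_cancel (by omega)⟩

theorem mdi_pathGraph {k r : ℕ} (hr : r ≤ k + 1) :
    mdi (pathGraph (k + 1 + r)) k = k + 1 - r + (r + 1).choose 2 := by
  rw [mdi, ← range_pathMaxDkIndep hr, Set.ncard_range_of_injective (pathMaxDkIndep_injective k r),
    Nat.card_sum, Nat.card_eq_fintype_card, Nat.card_eq_fintype_card, Fintype.card_fin,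
    Fintype.card_subtype, Fintype.card_product_filter_lt, Fintype.card_fin]

theorem mdi_pathGraph_seven_two : mdi (pathGraph 7) 2 = 8 := by
  classical
  rw [mdi, Set.ncard_setOf_eq_card_filter_finset,
    Finset.filter_congr fun s _ => maxDkIndep_pathGraph_iff]
  decide

/-- For `k ≥ 2`: `mdi_k(P_{k+2}) = k+1`, `mdi_k(P_{k+3}) = k+2`,
`mdi_k(P_{k+4}) = k+4`, and `mdi_k(P_{k+5}) ≥ k+6`. -/
theorem stmt_5 (k : ℕ) (hk : 2 ≤ k) :
    mdi (SimpleGraph.pathGraph (k + 2)) k = k + 1 ∧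
    mdi (SimpleGraph.pathGraph (k + 3)) k = k + 2 ∧
    mdi (SimpleGraph.pathGraph (k + 4)) k = k + 4 ∧
    k + 6 ≤ mdi (SimpleGraph.pathGraph (k + 5)) k := by
  refine ⟨?_, ?_, ?_, ?_⟩
  · rw [show k + 2 = k + 1 + 1 from rfl, mdi_pathGraph (by omega)]
    simp
  · rw [show k + 3 = k + 1 + 2 from rfl, mdi_pathGraph (by omega), Nat.choose_two_right]
    omega
  · rw [show k + 4 = k + 1 + 3 from rfl, mdi_pathGraph (by omega), Nat.choose_two_right]
    omega
  · obtain rfl | hk := hk.eq_or_lt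
    · exact mdi_pathGraph_seven_two.ge
    · rw [show k + 5 = k + 1 + 4 from rfl, mdi_pathGraph (by omega), Nat.choose_two_right]
      omega
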